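/- arXiv:1603.09094 — 3 statements merged into one kernel-verified Lean document; each statement's English description precedes it below -/
import Mathlib

section
/- Let (X_m)_{m≥1} be a sequence of nonnegative random variables, each defined on some probability space, and let (b_m) be positive reals with b_m → ∞. Suppose there exist p > 1 and C₀ > 0 such that for every β > 0: limsup_{m→∞} (1/b_m) · log E exp{ β X_m } ≤ C₀ β^p, and liminf_{m→∞} (1/b_m) · log E exp{ β b_m^{1/2} X_m^{1/2} } ≥ ((p+1)/p) · (pC₀)^{1/(p+1)} · (β/2)^{2p/(p+1)}. Then for every β > 0, lim_{m→∞} (1/b_m) · log E exp{ β X_m } = C₀ β^p. -/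
/-!
Young's inequality `β √(b x) ≤ β² b / (4γ) + γ x` gives
`(1/b) log E exp{β √(b X)} ≤ β²/(4γ) + (1/b) log E exp{γ X}`, so
`liminf (1/b) log E exp{γ X}` is at least the assumed lower exponent at `β` minus `β²/(4γ)`.
That exponent equals `min_γ (C₀ γ^p + β²/(4γ))`, attained where `β² = 4 p C₀ γ^(p+1)`; choosing
`β` this way, the difference is exactly `C₀ γ^p`, matching the assumed bound on the limsup.
-/

open MeasureTheory ProbabilityTheory Filter Topology Real Set ENNReal

lemma mul_le_sq_div_add_mul_sq {a u γ : ℝ} (hγ : 0 < γ) : a * u ≤ a ^ 2 / (4 * γ) + γ * u ^ 2 := by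
  rw [div_add' _ _ _ (by positivity), le_div_iff₀ (by positivity)]
  nlinarith [sq_nonneg (a - 2 * γ * u)]

lemma lintegral_ofReal_exp_le {Ω : Type*} [MeasurableSpace Ω] (μ : Measure Ω) {g h : Ω → ℝ}
    {c : ℝ} (hgh : ∀ ω, g ω ≤ c + h ω) :
    ∫⁻ ω, ENNReal.ofReal (exp (g ω)) ∂μ
      ≤ ENNReal.ofReal (exp c) * ∫⁻ ω, ENNReal.ofReal (exp (h ω)) ∂μ := by
  rw [← lintegral_const_mul' _ _ ofReal_ne_top]
  refine lintegral_mono fun ω => ?_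
  rw [← ENNReal.ofReal_mul (exp_nonneg _), ← exp_add]
  exact ENNReal.ofReal_le_ofReal (exp_le_exp.2 (hgh ω))

lemma log_lintegral_ofReal_exp_le {Ω : Type*} [MeasurableSpace Ω] (μ : Measure Ω) {g h : Ω → ℝ}
    {c : ℝ} (hgh : ∀ ω, g ω ≤ c + h ω) :
    ENNReal.log (∫⁻ ω, ENNReal.ofReal (exp (g ω)) ∂μ)
      ≤ (c : EReal) + ENNReal.log (∫⁻ ω, ENNReal.ofReal (exp (h ω)) ∂μ) := by
  calc _ ≤ ENNReal.log (ENNReal.ofReal (exp c) * ∫⁻ ω, ENNReal.ofReal (exp (h ω)) ∂μ) :=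
        ENNReal.log_monotone (lintegral_ofReal_exp_le μ hgh)
    _ = _ := by rw [ENNReal.log_mul_add, ENNReal.log_ofReal_of_pos (exp_pos c), Real.log_exp]

lemma EReal.coe_mul_le_coe_add_coe_mul {x y : EReal} {s a : ℝ} (hs : 0 ≤ s)
    (h : x ≤ (a : EReal) + y) : (s : EReal) * x ≤ ((s * a : ℝ) : EReal) + (s : EReal) * y := by
  calc (s : EReal) * x ≤ (s : EReal) * ((a : EReal) + y) :=
        mul_le_mul_of_nonneg_left h (EReal.coe_nonneg.2 hs)
    _ = _ := by
      rw [EReal.left_distrib_of_nonneg_of_ne_top (EReal.coe_nonneg.2 hs) (EReal.coe_ne_top s),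
        EReal.coe_mul]

lemma EReal.le_liminf_of_le_coe_add {α : Type*} {l : Filter α} [l.NeBot] {f g : α → EReal}
    {a c : ℝ} (hgf : ∀ m, g m ≤ (c : EReal) + f m) (hg : ((a + c : ℝ) : EReal) ≤ liminf g l) :
    (a : EReal) ≤ liminf f l := by
  have hc : limsup (fun _ => (c : EReal)) l = c := limsup_const _
  have hliminf : liminf g l ≤ c + liminf f l := by
    calc liminf g l ≤ liminf ((fun _ => (c : EReal)) + f) l :=
          liminf_le_liminf (Eventually.of_forall hgf)
      _ ≤ _ := by
        convert EReal.liminf_add_le (.inl ?_) (.inl ?_) <;> simp [hc]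
  calc (a : EReal) = ((a + c : ℝ) : EReal) - c := by rw [EReal.coe_add, EReal.add_sub_cancel_right]
    _ ≤ (c + liminf f l) - c := EReal.sub_le_sub (hg.trans hliminf) le_rfl
    _ = liminf f l := EReal.add_sub_cancel_left

lemma lower_exponent_eq {p C₀ γ β : ℝ} (hp : 0 < p) (hC₀ : 0 < C₀) (hγ : 0 < γ)
    (hβ : β = 2 * √(p * C₀ * γ ^ (p + 1))) :
    (p + 1) / p * (p * C₀) ^ ((1 : ℝ) / (p + 1)) * (β / 2) ^ (2 * p / (p + 1))
      = C₀ * γ ^ p + β ^ 2 / (4 * γ) := by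
  have hpC : 0 < p * C₀ := by positivity
  have hhalf : (β / 2) ^ (2 * p / (p + 1)) = (p * C₀) ^ (p / (p + 1)) * γ ^ p := by
    rw [hβ, mul_div_cancel_left₀ _ two_ne_zero, sqrt_eq_rpow, ← rpow_mul (by positivity),
      mul_rpow hpC.le (by positivity), ← rpow_mul hγ.le]
    congr 2 <;> field_simp
  have hpow : (p * C₀) ^ ((1 : ℝ) / (p + 1)) * (p * C₀) ^ (p / (p + 1)) = p * C₀ := by
    rw [← rpow_add hpC, ← add_div, add_comm, div_self (by positivity), Real.rpow_one]
  have hsq : β ^ 2 / (4 * γ) = p * C₀ * γ ^ p := by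
    rw [hβ, mul_pow, sq_sqrt (by positivity), rpow_add hγ, Real.rpow_one]
    field_simp
    norm_num
  rw [hhalf, hsq, mul_assoc, ← mul_assoc _ _ (γ ^ p), hpow]
  field_simp
  ring

theorem statement_8_general
    (Ω : ℕ → Type*) [∀ m, MeasurableSpace (Ω m)]
    (P : ∀ m, Measure (Ω m))
    (X : ∀ m, Ω m → ℝ) (hXnonneg : ∀ m ω, 0 ≤ X m ω)
    (b : ℕ → ℝ) (hbpos : ∀ m, 0 < b m)
    (p C₀ : ℝ) (hp : 1 < p) (hC₀ : 0 < C₀)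
    (hub : ∀ β : ℝ, 0 < β →
      limsup (fun m : ℕ => ((1 / b m : ℝ) : EReal) *
          ENNReal.log (∫⁻ ω, ENNReal.ofReal (Real.exp (β * X m ω)) ∂(P m))) atTop
        ≤ ((C₀ * β ^ p : ℝ) : EReal))
    (hlb : ∀ β : ℝ, 0 < β →
      ((((p + 1) / p) * (p * C₀) ^ ((1 : ℝ) / (p + 1)) *
          (β / 2) ^ (2 * p / (p + 1)) : ℝ) : EReal)
        ≤ liminf (fun m : ℕ => ((1 / b m : ℝ) : EReal) *
            ENNReal.log (∫⁻ ω, ENNReal.ofReal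
              (Real.exp (β * Real.sqrt (b m) * Real.sqrt (X m ω))) ∂(P m))) atTop) :
    ∀ β : ℝ, 0 < β →
      Tendsto (fun m : ℕ => ((1 / b m : ℝ) : EReal) *
          ENNReal.log (∫⁻ ω, ENNReal.ofReal (Real.exp (β * X m ω)) ∂(P m))) atTop
        (𝓝 ((C₀ * β ^ p : ℝ) : EReal)) := by
  intro γ hγ
  set β := 2 * √(p * C₀ * γ ^ (p + 1)) with hβ
  have hβpos : 0 < β := by positivity
  have hyoung : ∀ m ω, β * √(b m) * √(X m ω) ≤ β ^ 2 / (4 * γ) * b m + γ * X m ω := by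
    intro m ω
    have := mul_le_sq_div_add_mul_sq (a := β * √(b m)) (u := √(X m ω)) hγ
    rwa [mul_pow, sq_sqrt (hbpos m).le, sq_sqrt (hXnonneg m ω), mul_div_right_comm] at this
  have hcompare : ∀ m, ((1 / b m : ℝ) : EReal) *
        ENNReal.log (∫⁻ ω, ENNReal.ofReal (exp (β * √(b m) * √(X m ω))) ∂(P m))
      ≤ ((β ^ 2 / (4 * γ) : ℝ) : EReal) + ((1 / b m : ℝ) : EReal) *
        ENNReal.log (∫⁻ ω, ENNReal.ofReal (exp (γ * X m ω)) ∂(P m)) := by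
    intro m
    have h := EReal.coe_mul_le_coe_add_coe_mul (one_div_pos.2 (hbpos m)).le
      (log_lintegral_ofReal_exp_le (P m) (hyoung m))
    rwa [one_div_mul_eq_div, mul_div_cancel_right₀ _ (hbpos m).ne'] at h
  refine tendsto_of_le_liminf_of_limsup_le ?_ (hub γ hγ)
  refine EReal.le_liminf_of_le_coe_add hcompare ?_
  rw [← lower_exponent_eq (by linarith) hC₀ hγ hβ]
  exact hlb β hβpos

/-- Lemma A.2, first assertion.  Let `X_m ≥ 0` be random variables and
`b_m → ∞` positive reals.  If for every `β > 0`
`limsup (1/b_m) log E exp{β X_m} ≤ C₀ β^p` and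
`liminf (1/b_m) log E exp{β √(b_m) √(X_m)} ≥ ((p+1)/p)(pC₀)^{1/(p+1)}(β/2)^{2p/(p+1)}`,
then for every `β > 0`, `lim (1/b_m) log E exp{β X_m} = C₀ β^p`. -/
theorem statement_8
    (Ω : ℕ → Type*) [∀ m, MeasurableSpace (Ω m)]
    (P : ∀ m, Measure (Ω m)) [∀ m, IsProbabilityMeasure (P m)]
    (X : ∀ m, Ω m → ℝ) (hXmeas : ∀ m, Measurable (X m)) (hXnonneg : ∀ m ω, 0 ≤ X m ω)
    (b : ℕ → ℝ) (hbpos : ∀ m, 0 < b m) (hbtop : Tendsto b atTop atTop)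
    (p C₀ : ℝ) (hp : 1 < p) (hC₀ : 0 < C₀)
    (hub : ∀ β : ℝ, 0 < β →
      limsup (fun m : ℕ => ((1 / b m : ℝ) : EReal) *
          ENNReal.log (∫⁻ ω, ENNReal.ofReal (Real.exp (β * X m ω)) ∂(P m))) atTop
        ≤ ((C₀ * β ^ p : ℝ) : EReal))
    (hlb : ∀ β : ℝ, 0 < β →
      ((((p + 1) / p) * (p * C₀) ^ ((1 : ℝ) / (p + 1)) *
          (β / 2) ^ (2 * p / (p + 1)) : ℝ) : EReal)
        ≤ liminf (fun m : ℕ => ((1 / b m : ℝ) : EReal) *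
            ENNReal.log (∫⁻ ω, ENNReal.ofReal
              (Real.exp (β * Real.sqrt (b m) * Real.sqrt (X m ω))) ∂(P m))) atTop) :
    ∀ β : ℝ, 0 < β →
      Tendsto (fun m : ℕ => ((1 / b m : ℝ) : EReal) *
          ENNReal.log (∫⁻ ω, ENNReal.ofReal (Real.exp (β * X m ω)) ∂(P m))) atTop
        (𝓝 ((C₀ * β ^ p : ℝ) : EReal)) :=
  statement_8_general Ω P X hXnonneg b hbpos p C₀ hp hC₀ hub hlb
end

section
/- Let (X_m)_{m≥1} be a sequence of nonnegative random variables, each defined on some probability space, and let (b_m) be positive reals with b_m → ∞. Suppose there exist p > 1 and C₀ > 0 such that: for every β > 0, limsup_{m→∞} (1/b_m) · log E exp{ β X_m } < ∞, and for every β > 0, lim_{m→∞} (1/b_m) · log E exp{ β (b_m X_m)^{1/2} } = ((p+1)/p) · (pC₀)^{1/(p+1)} · (β/2)^{2p/(p+1)}. Then for every β > 0, lim_{m→∞} (1/b_m) · log E exp{ β X_m } = C₀ β^p. -/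
open MeasureTheory ProbabilityTheory Filter Topology Real Set ENNReal

noncomputable section

/-!
Write `Λ = sqrtMomentRate p C₀` for the rate of `E exp(s √(b X))`. By AM–GM,
`s √(b x) ≤ b s² / (4β) + β x`, with equality at `s = 2β √(b x) / b`, and by Young's inequality
`Λ(s) ≤ s² / (4β) + C₀ β^p`, with equality at `s₀ = 2 √(p C₀) β^((p+1)/2)`.

Integrating AM–GM at `s₀` gives `E exp(s₀ √(b X)) ≤ e^(b s₀² / (4β)) E exp(β X)`, and the rate of
the left side is `Λ(s₀) = s₀² / (4β) + C₀ β^p`: this is the lower bound.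

For the upper bound, on `{X ≤ R b}` the optimal `s` lies in `[0, 2β √R]`, so up to a factor
`e^(b h² / (4β))` the function `exp(β X)` is dominated by the sum, over a grid of mesh `h`, of
`exp(s √(b X) - b s² / (4β))`, each term of rate at most `C₀ β^p` by Young. On `{X > R b}`,
`exp(β X) ≤ e^(-β R b) exp(2β X)`, negligible once `β R` exceeds the rate bound of
`E exp(2β X)`. A finite sum of terms does not change the exponential rate.
-/

lemma inv_mul_log_le_iff {b c : ℝ} (hb : 0 < b) {I : ℝ≥0∞} :
    ((1 / b : ℝ) : EReal) * ENNReal.log I ≤ c ↔ I ≤ ENNReal.ofReal (Real.exp (c * b)) := by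
  rw [one_div, EReal.coe_inv, ← EReal.div_eq_inv_mul,
    EReal.div_le_iff_le_mul (by exact_mod_cast hb) (EReal.coe_ne_top b), ← EReal.coe_mul,
    ← EReal.exp_coe, ← ENNReal.log_le_log_iff, EReal.log_exp, mul_comm]

lemma le_inv_mul_log_iff {b c : ℝ} (hb : 0 < b) {I : ℝ≥0∞} :
    (c : EReal) ≤ ((1 / b : ℝ) : EReal) * ENNReal.log I ↔
      ENNReal.ofReal (Real.exp (c * b)) ≤ I := by
  rw [one_div, EReal.coe_inv, ← EReal.div_eq_inv_mul,
    EReal.le_div_iff_mul_le (by exact_mod_cast hb) (EReal.coe_ne_top b), ← EReal.coe_mul,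
    ← EReal.exp_coe, ← ENNReal.log_le_log_iff, EReal.log_exp]

lemma tendsto_inv_mul_log_iff {ι : Type*} {l : Filter ι} {b : ι → ℝ} (hb : ∀ i, 0 < b i)
    {I : ι → ℝ≥0∞} {L : ℝ} :
    Tendsto (fun i => ((1 / b i : ℝ) : EReal) * ENNReal.log (I i)) l (𝓝 (L : EReal)) ↔
      ∀ ε > 0, ∀ᶠ i in l, ENNReal.ofReal (Real.exp ((L - ε) * b i)) ≤ I i ∧
        I i ≤ ENNReal.ofReal (Real.exp ((L + ε) * b i)) := by
  simp_rw [← le_inv_mul_log_iff (hb _), ← inv_mul_log_le_iff (hb _)]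
  constructor
  · intro h ε hε
    have hlo : ((L - ε : ℝ) : EReal) < L := by exact_mod_cast sub_lt_self L hε
    have hhi : (L : EReal) < ((L + ε : ℝ) : EReal) := by
      exact_mod_cast lt_add_of_pos_right L hε
    filter_upwards [h.eventually_const_lt hlo, h.eventually_lt_const hhi] with i h₁ h₂
    exact ⟨h₁.le, h₂.le⟩
  · intro h
    refine tendsto_order.2 ⟨fun a ha => ?_, fun a ha => ?_⟩
    · obtain ⟨d, had, hdL⟩ := EReal.lt_iff_exists_real_btwn.1 ha
      have hε : 0 < L - d := sub_pos.2 (by exact_mod_cast hdL)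
      filter_upwards [h _ hε] with i hi
      exact had.trans_le (by simpa using hi.1)
    · obtain ⟨d, hLd, hda⟩ := EReal.lt_iff_exists_real_btwn.1 ha
      have hε : 0 < d - L := sub_pos.2 (by exact_mod_cast hLd)
      filter_upwards [h _ hε] with i hi
      exact (by simpa using hi.2 : _ ≤ (d : EReal)).trans_lt hda

lemma exists_eventually_le_of_limsup_lt_top {ι : Type*} {l : Filter ι} {b : ι → ℝ}
    (hb : ∀ i, 0 < b i) {I : ι → ℝ≥0∞}
    (h : limsup (fun i => ((1 / b i : ℝ) : EReal) * ENNReal.log (I i)) l < ⊤) :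
    ∃ M : ℝ, ∀ᶠ i in l, I i ≤ ENNReal.ofReal (Real.exp (M * b i)) := by
  obtain ⟨M, hM, -⟩ := EReal.lt_iff_exists_real_btwn.1 h
  exact ⟨M, (eventually_lt_of_limsup_lt hM).mono fun i hi =>
    (inv_mul_log_le_iff (hb i)).1 hi.le⟩

def sqrtMomentRate (p C₀ s : ℝ) : ℝ :=
  ((p + 1) / p) * (p * C₀) ^ ((1 : ℝ) / (p + 1)) * (s / 2) ^ (2 * p / (p + 1))

lemma sq_two_mul_sqrt_mul_rpow_half {a t : ℝ} (ha : 0 ≤ a) (ht : 0 ≤ t) (q : ℝ) :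
    (2 * √a * t ^ (q / 2)) ^ 2 = 4 * a * t ^ q := by
  rw [mul_pow, mul_pow, sq_sqrt ha, ← Real.rpow_natCast (t ^ _), ← Real.rpow_mul ht]
  norm_num

lemma sqrtMomentRate_two_mul_sqrt_mul_rpow {p C₀ t : ℝ} (hp : 0 < p) (hC₀ : 0 ≤ C₀)
    (ht : 0 ≤ t) :
    sqrtMomentRate p C₀ (2 * √(p * C₀) * t ^ ((p + 1) / 2)) = (p + 1) * C₀ * t ^ p := by
  have hpC : 0 ≤ p * C₀ := by positivity
  have hsplit : (p * C₀) ^ ((1 : ℝ) / (p + 1)) * (p * C₀) ^ (p / (p + 1)) = p * C₀ := by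
    rw [← rpow_add' hpC (by field_simp; positivity), ← add_div, add_comm,
      div_self (by positivity), Real.rpow_one]
  have hhalf : 2 * √(p * C₀) * t ^ ((p + 1) / 2) / 2 = √(p * C₀) * t ^ ((p + 1) / 2) := by
    ring
  rw [sqrtMomentRate, hhalf, mul_rpow (sqrt_nonneg _) (by positivity), sqrt_eq_rpow,
    ← Real.rpow_mul hpC, ← Real.rpow_mul ht]
  calc (p + 1) / p * (p * C₀) ^ ((1 : ℝ) / (p + 1)) *
        ((p * C₀) ^ (1 / 2 * (2 * p / (p + 1))) * t ^ ((p + 1) / 2 * (2 * p / (p + 1))))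
      = (p + 1) / p * ((p * C₀) ^ ((1 : ℝ) / (p + 1)) * (p * C₀) ^ (p / (p + 1))) * t ^ p :=
        by field_simp
    _ = (p + 1) * C₀ * t ^ p := by rw [hsplit]; field_simp

lemma add_one_mul_rpow_mul_le {p t β : ℝ} (hp : 0 ≤ p) (ht : 0 ≤ t) (hβ : 0 ≤ β) :
    (p + 1) * (t ^ p * β) ≤ p * t ^ (p + 1) + β ^ (p + 1) := by
  have hp1 : 0 < p + 1 := by linarith
  have h := geom_mean_le_arith_mean2_weighted (w₁ := p / (p + 1)) (w₂ := 1 / (p + 1))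
    (p₁ := t ^ (p + 1)) (p₂ := β ^ (p + 1)) (by positivity) (by positivity) (by positivity)
    (by positivity) (by field_simp)
  rw [← Real.rpow_mul ht, ← Real.rpow_mul hβ, mul_div_cancel₀ _ hp1.ne',
    mul_one_div_cancel hp1.ne', Real.rpow_one] at h
  calc (p + 1) * (t ^ p * β)
      ≤ (p + 1) * (p / (p + 1) * t ^ (p + 1) + 1 / (p + 1) * β ^ (p + 1)) := by gcongr
    _ = p * t ^ (p + 1) + β ^ (p + 1) := by field_simp

lemma sqrtMomentRate_le {p C₀ s β : ℝ} (hp : 0 < p) (hC₀ : 0 < C₀) (hs : 0 ≤ s)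
    (hβ : 0 < β) :
    sqrtMomentRate p C₀ s ≤ s ^ 2 / (4 * β) + C₀ * β ^ p := by
  -- substituting `s = 2 √(p C₀) t^((p+1)/2)` turns the claim into the tangent-line
  -- inequality `add_one_mul_rpow_mul_le` for the convex function `t ↦ t^(p+1)`
  have hc : 0 < 2 * √(p * C₀) := by positivity
  set t := (s / (2 * √(p * C₀))) ^ (2 / (p + 1)) with ht_def
  have ht : 0 ≤ t := by positivity
  have hst : s = 2 * √(p * C₀) * t ^ ((p + 1) / 2) := by
    rw [ht_def, ← Real.rpow_mul (by positivity), div_mul_div_cancel₀ (by positivity),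
      div_self two_ne_zero, Real.rpow_one, mul_div_cancel₀ _ hc.ne']
  rw [hst, sqrtMomentRate_two_mul_sqrt_mul_rpow hp hC₀.le ht,
    sq_two_mul_sqrt_mul_rpow_half (by positivity) ht, ← div_le_div_iff_of_pos_right hC₀,
    ← mul_le_mul_iff_of_pos_left hβ]
  have key := add_one_mul_rpow_mul_le hp.le ht hβ.le
  rw [rpow_add_one hβ.ne'] at key
  calc β * ((p + 1) * C₀ * t ^ p / C₀) = (p + 1) * (t ^ p * β) := by field_simp
    _ ≤ p * t ^ (p + 1) + β ^ p * β := key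
    _ = β * ((4 * (p * C₀) * t ^ (p + 1) / (4 * β) + C₀ * β ^ p) / C₀) := by field_simp

lemma sqrtMomentRate_eq {p C₀ β : ℝ} (hp : 0 < p) (hC₀ : 0 ≤ C₀) (hβ : 0 < β) :
    sqrtMomentRate p C₀ (2 * √(p * C₀) * β ^ ((p + 1) / 2)) =
      (2 * √(p * C₀) * β ^ ((p + 1) / 2)) ^ 2 / (4 * β) + C₀ * β ^ p := by
  rw [sqrtMomentRate_two_mul_sqrt_mul_rpow hp hC₀ hβ.le,
    sq_two_mul_sqrt_mul_rpow_half (by positivity) hβ.le, rpow_add_one hβ.ne']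
  field_simp

lemma ofReal_exp_mul_ofReal_exp (a c : ℝ) :
    ENNReal.ofReal (Real.exp a) * ENNReal.ofReal (Real.exp c) =
      ENNReal.ofReal (Real.exp (a + c)) := by
  rw [← ENNReal.ofReal_mul (Real.exp_pos a).le, Real.exp_add]

lemma ofReal_exp_le_ofReal_exp {a c : ℝ} :
    ENNReal.ofReal (Real.exp a) ≤ ENNReal.ofReal (Real.exp c) ↔ a ≤ c := by
  rw [ENNReal.ofReal_le_ofReal_iff (Real.exp_pos c).le, Real.exp_le_exp]

lemma mul_add_sub_mul_sqrt_eq_sq {b β x : ℝ} (hb : 0 < b) (hβ : 0 < β) (hx : 0 ≤ x)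
    (s : ℝ) :
    β * x + b * s ^ 2 / (4 * β) - s * √(b * x) =
      b * (s - 2 * β * √(b * x) / b) ^ 2 / (4 * β) := by
  have hu : √(b * x) ^ 2 = b * x := sq_sqrt (by positivity)
  set u := √(b * x)
  field_simp
  linear_combination (-4 * β ^ 2) * hu

lemma mul_sqrt_le_add {b β x : ℝ} (hb : 0 < b) (hβ : 0 < β) (hx : 0 ≤ x) (s : ℝ) :
    s * √(b * x) ≤ b * s ^ 2 / (4 * β) + β * x := by
  have h := mul_add_sub_mul_sqrt_eq_sq hb hβ hx s
  have : 0 ≤ b * (s - 2 * β * √(b * x) / b) ^ 2 / (4 * β) := by positivity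
  linarith

lemma mul_le_mul_sqrt_sub_add_of_le_of_le {b β x s h : ℝ} (hb : 0 < b) (hβ : 0 < β)
    (hx : 0 ≤ x)
    (hs : 2 * β * √(b * x) / b ≤ s) (hsh : s ≤ 2 * β * √(b * x) / b + h) :
    β * x ≤ s * √(b * x) - b * s ^ 2 / (4 * β) + b * h ^ 2 / (4 * β) := by
  have hid := mul_add_sub_mul_sqrt_eq_sq hb hβ hx s
  have : (s - 2 * β * √(b * x) / b) ^ 2 ≤ h ^ 2 := by
    apply pow_le_pow_left₀ <;> linarith
  have : b * (s - 2 * β * √(b * x) / b) ^ 2 / (4 * β) ≤ b * h ^ 2 / (4 * β) := by gcongr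
  linarith

lemma exists_finset_pos_cover (T : ℝ) {h : ℝ} (hh : 0 < h) :
    ∃ S : Finset ℝ, (∀ s ∈ S, 0 < s) ∧
      ∀ t ∈ Icc 0 T, ∃ s ∈ S, t ≤ s ∧ s ≤ t + h := by
  refine ⟨(Finset.range (⌊T / h⌋₊ + 1)).image fun j : ℕ => ((j : ℝ) + 1) * h, ?_, ?_⟩
  · simp only [Finset.mem_image]
    rintro _ ⟨j, -, rfl⟩
    positivity
  · rintro t ⟨ht, htT⟩
    refine ⟨(⌊t / h⌋₊ + 1) * h, Finset.mem_image_of_mem _ ?_, ?_, ?_⟩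
    · exact Finset.mem_range_succ_iff.2 (Nat.floor_le_floor (by gcongr))
    · rw [← div_le_iff₀ hh]
      exact (Nat.lt_floor_add_one _).le
    · rw [add_mul, one_mul, add_le_add_iff_right, ← le_div_iff₀ hh]
      exact Nat.floor_le (by positivity)

lemma ofReal_exp_mul_le_sum_add {β b R h x : ℝ} {S : Finset ℝ} (hβ : 0 < β) (hb : 0 < b)
    (hR : 0 ≤ R) (hx : 0 ≤ x)
    (hS : ∀ t ∈ Icc 0 (2 * β * √R), ∃ s ∈ S, t ≤ s ∧ s ≤ t + h) :
    ENNReal.ofReal (Real.exp (β * x)) ≤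
      ∑ s ∈ S, ENNReal.ofReal (Real.exp (b * (h ^ 2 - s ^ 2) / (4 * β))) *
          ENNReal.ofReal (Real.exp (s * √(b * x))) +
        ENNReal.ofReal (Real.exp (-(β * R * b))) * ENNReal.ofReal (Real.exp (2 * β * x)) := by
  simp_rw [ofReal_exp_mul_ofReal_exp]
  rcases le_or_gt x (R * b) with hxR | hxR
  · have ht : 2 * β * √(b * x) / b ∈ Icc 0 (2 * β * √R) := by
      refine ⟨by positivity, ?_⟩
      have hsqrt : √(b * x) ≤ √R * b := calc
        √(b * x) ≤ √(b * (R * b)) := by gcongr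
        _ = √R * b := by rw [mul_comm, mul_assoc, sqrt_mul hR, sqrt_mul_self hb.le]
      rw [div_le_iff₀ hb]
      calc 2 * β * √(b * x) ≤ 2 * β * (√R * b) := by gcongr
        _ = 2 * β * √R * b := by ring
    obtain ⟨s, hsS, hs, hsh⟩ := hS _ ht
    refine le_add_right (le_trans ?_ (Finset.single_le_sum (fun _ _ => zero_le) hsS))
    rw [ofReal_exp_le_ofReal_exp]
    have := mul_le_mul_sqrt_sub_add_of_le_of_le hb hβ hx hs hsh
    have hsplit : b * (h ^ 2 - s ^ 2) / (4 * β) = b * h ^ 2 / (4 * β) - b * s ^ 2 / (4 * β) := by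
      ring
    linarith
  · refine le_add_left ((ofReal_exp_le_ofReal_exp).2 ?_)
    nlinarith

lemma eventually_natCast_mul_ofReal_exp_le {ι : Type*} {l : Filter ι} {b : ι → ℝ}
    (hb : Tendsto b l atTop) (n : ℕ) (c : ℝ) {ε : ℝ} (hε : 0 < ε) :
    ∀ᶠ i in l, (n : ℝ≥0∞) * ENNReal.ofReal (Real.exp (c * b i)) ≤
      ENNReal.ofReal (Real.exp ((c + ε) * b i)) := by
  filter_upwards [(Real.tendsto_exp_atTop.comp (hb.const_mul_atTop hε)).eventually_ge_atTop
    (n : ℝ)] with i hi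
  rw [← ENNReal.ofReal_natCast, add_mul, add_comm, ← ofReal_exp_mul_ofReal_exp]
  gcongr
  exact hi

section Moments

variable {Ω : Type*} [MeasurableSpace Ω] {μ : Measure Ω} {X : Ω → ℝ}

lemma lintegral_exp_mul_sqrt_le {b β : ℝ} (hX : ∀ ω, 0 ≤ X ω) (hb : 0 < b) (hβ : 0 < β)
    (s : ℝ) :
    ∫⁻ ω, ENNReal.ofReal (Real.exp (s * √(b * X ω))) ∂μ ≤
      ENNReal.ofReal (Real.exp (b * s ^ 2 / (4 * β))) *
        ∫⁻ ω, ENNReal.ofReal (Real.exp (β * X ω)) ∂μ := by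
  rw [← lintegral_const_mul' _ _ ENNReal.ofReal_ne_top]
  refine lintegral_mono fun ω => ?_
  rw [ofReal_exp_mul_ofReal_exp, ofReal_exp_le_ofReal_exp]
  exact mul_sqrt_le_add hb hβ (hX ω) s

lemma lintegral_exp_mul_le_sum_add {β b R h : ℝ} {S : Finset ℝ} (hXm : Measurable X)
    (hX : ∀ ω, 0 ≤ X ω) (hβ : 0 < β) (hb : 0 < b) (hR : 0 ≤ R)
    (hS : ∀ t ∈ Icc 0 (2 * β * √R), ∃ s ∈ S, t ≤ s ∧ s ≤ t + h) :
    ∫⁻ ω, ENNReal.ofReal (Real.exp (β * X ω)) ∂μ ≤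
      ∑ s ∈ S, ENNReal.ofReal (Real.exp (b * (h ^ 2 - s ^ 2) / (4 * β))) *
          ∫⁻ ω, ENNReal.ofReal (Real.exp (s * √(b * X ω))) ∂μ +
        ENNReal.ofReal (Real.exp (-(β * R * b))) *
          ∫⁻ ω, ENNReal.ofReal (Real.exp (2 * β * X ω)) ∂μ := by
  calc ∫⁻ ω, ENNReal.ofReal (Real.exp (β * X ω)) ∂μ
      ≤ ∫⁻ ω, (∑ s ∈ S, ENNReal.ofReal (Real.exp (b * (h ^ 2 - s ^ 2) / (4 * β))) *
            ENNReal.ofReal (Real.exp (s * √(b * X ω))) +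
          ENNReal.ofReal (Real.exp (-(β * R * b))) *
            ENNReal.ofReal (Real.exp (2 * β * X ω))) ∂μ :=
        lintegral_mono fun ω => ofReal_exp_mul_le_sum_add hβ hb hR (hX ω) hS
    _ = _ := by
        rw [lintegral_add_right _ (by fun_prop), lintegral_finsetSum _ (fun _ _ => by fun_prop),
          lintegral_const_mul' _ _ ENNReal.ofReal_ne_top]
        simp_rw [lintegral_const_mul' _ _ ENNReal.ofReal_ne_top]

end Moments

section Sequences

variable {ι : Type*} {l : Filter ι} {Ω : ι → Type*} [∀ i, MeasurableSpace (Ω i)]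
  {P : ∀ i, Measure (Ω i)} {X : ∀ i, Ω i → ℝ} {b : ι → ℝ} {p C₀ β ε : ℝ}

lemma eventually_ofReal_exp_le_lintegral (hX : ∀ i ω, 0 ≤ X i ω) (hb : ∀ i, 0 < b i)
    (hp : 0 < p) (hC₀ : 0 < C₀)
    (hlb : ∀ s : ℝ, 0 < s →
      Tendsto (fun i => ((1 / b i : ℝ) : EReal) *
          ENNReal.log (∫⁻ ω, ENNReal.ofReal (Real.exp (s * √(b i * X i ω))) ∂(P i))) l
        (𝓝 (sqrtMomentRate p C₀ s : EReal)))
    (hβ : 0 < β) (hε : 0 < ε) :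
    ∀ᶠ i in l, ENNReal.ofReal (Real.exp ((C₀ * β ^ p - ε) * b i)) ≤
      ∫⁻ ω, ENNReal.ofReal (Real.exp (β * X i ω)) ∂(P i) := by
  set s₀ := 2 * √(p * C₀) * β ^ ((p + 1) / 2)
  have hs₀ : 0 < s₀ := by positivity
  filter_upwards [(tendsto_inv_mul_log_iff hb).1 (hlb s₀ hs₀) ε hε] with i hi
  have h := hi.1.trans (lintegral_exp_mul_sqrt_le (hX i) (hb i) hβ s₀)
  rw [sqrtMomentRate_eq hp hC₀.le hβ,
    show (s₀ ^ 2 / (4 * β) + C₀ * β ^ p - ε) * b i =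
      b i * s₀ ^ 2 / (4 * β) + (C₀ * β ^ p - ε) * b i by ring,
    ← ofReal_exp_mul_ofReal_exp] at h
  exact (ENNReal.mul_le_mul_iff_right (by positivity) ENNReal.ofReal_ne_top).1 h

lemma eventually_lintegral_le_ofReal_exp (hXm : ∀ i, Measurable (X i)) (hX : ∀ i ω, 0 ≤ X i ω)
    (hb : ∀ i, 0 < b i) (hbtop : Tendsto b l atTop) (hp : 0 < p) (hC₀ : 0 < C₀)
    (hub : limsup (fun i => ((1 / b i : ℝ) : EReal) *
        ENNReal.log (∫⁻ ω, ENNReal.ofReal (Real.exp (2 * β * X i ω)) ∂(P i))) l < ⊤)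
    (hlb : ∀ s : ℝ, 0 < s →
      Tendsto (fun i => ((1 / b i : ℝ) : EReal) *
          ENNReal.log (∫⁻ ω, ENNReal.ofReal (Real.exp (s * √(b i * X i ω))) ∂(P i))) l
        (𝓝 (sqrtMomentRate p C₀ s : EReal)))
    (hβ : 0 < β) (hε : 0 < ε) :
    ∀ᶠ i in l, ∫⁻ ω, ENNReal.ofReal (Real.exp (β * X i ω)) ∂(P i) ≤
      ENNReal.ofReal (Real.exp ((C₀ * β ^ p + ε) * b i)) := by
  obtain ⟨M, hM⟩ := exists_eventually_le_of_limsup_lt_top hb hub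
  set R := |M| / β
  set h := √(β * ε)
  have hh : h ^ 2 = β * ε := sq_sqrt (by positivity)
  obtain ⟨S, hS0, hS⟩ := exists_finset_pos_cover (2 * β * √R) (show 0 < h by positivity)
  have hJ : ∀ᶠ i in l, ∀ s ∈ S, ∫⁻ ω, ENNReal.ofReal (Real.exp (s * √(b i * X i ω))) ∂(P i) ≤
      ENNReal.ofReal (Real.exp ((sqrtMomentRate p C₀ s + ε / 4) * b i)) :=
    (eventually_all_finset S).2 fun s hs =>
      ((tendsto_inv_mul_log_iff hb).1 (hlb s (hS0 s hs)) _ (by positivity)).mono fun _ hi => hi.2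
  filter_upwards [hM, hJ, eventually_natCast_mul_ofReal_exp_le hbtop (S.card + 1)
    (C₀ * β ^ p + ε / 2) (half_pos hε)] with i hMi hJi hcard
  set E := ENNReal.ofReal (Real.exp ((C₀ * β ^ p + ε / 2) * b i))
  have hterm : ∀ s ∈ S, ENNReal.ofReal (Real.exp (b i * (h ^ 2 - s ^ 2) / (4 * β))) *
      ∫⁻ ω, ENNReal.ofReal (Real.exp (s * √(b i * X i ω))) ∂(P i) ≤ E := fun s hs => by
    refine (mul_le_mul_right (hJi s hs) _).trans ?_
    rw [ofReal_exp_mul_ofReal_exp, ofReal_exp_le_ofReal_exp, hh]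
    have := sqrtMomentRate_le hp hC₀ (hS0 s hs).le hβ
    calc b i * (β * ε - s ^ 2) / (4 * β) + (sqrtMomentRate p C₀ s + ε / 4) * b i
        = (sqrtMomentRate p C₀ s - s ^ 2 / (4 * β) + ε / 2) * b i := by field_simp; ring
      _ ≤ (C₀ * β ^ p + ε / 2) * b i :=
          mul_le_mul_of_nonneg_right (by linarith) (hb i).le
  have htail : ENNReal.ofReal (Real.exp (-(β * R * b i))) *
      ∫⁻ ω, ENNReal.ofReal (Real.exp (2 * β * X i ω)) ∂(P i) ≤ E := by
    refine (mul_le_mul_right hMi _).trans ?_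
    rw [ofReal_exp_mul_ofReal_exp, ofReal_exp_le_ofReal_exp,
      show β * R = |M| by simp only [R]; field_simp]
    have := le_abs_self M
    have := hb i
    nlinarith [show 0 < C₀ * β ^ p by positivity]
  calc ∫⁻ ω, ENNReal.ofReal (Real.exp (β * X i ω)) ∂(P i)
      ≤ _ := lintegral_exp_mul_le_sum_add (hXm i) (hX i) hβ (hb i) (by positivity) hS
    _ ≤ ∑ _s ∈ S, E + E := add_le_add (Finset.sum_le_sum hterm) htail
    _ = ((S.card + 1 : ℕ) : ℝ≥0∞) * E := by simp [add_mul]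
    _ ≤ _ := by rwa [add_assoc, add_halves] at hcard

end Sequences

theorem statement_9_general
    (Ω : ℕ → Type*) [∀ m, MeasurableSpace (Ω m)]
    (P : ∀ m, Measure (Ω m))
    (X : ∀ m, Ω m → ℝ) (hXmeas : ∀ m, Measurable (X m)) (hXnonneg : ∀ m ω, 0 ≤ X m ω)
    (b : ℕ → ℝ) (hbpos : ∀ m, 0 < b m) (hbtop : Tendsto b atTop atTop)
    (p C₀ : ℝ) (hp : 1 < p) (hC₀ : 0 < C₀)
    (hub : ∀ β : ℝ, 0 < β →
      limsup (fun m : ℕ => ((1 / b m : ℝ) : EReal) *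
          ENNReal.log (∫⁻ ω, ENNReal.ofReal (Real.exp (β * X m ω)) ∂(P m))) atTop
        < (⊤ : EReal))
    (hlb : ∀ β : ℝ, 0 < β →
      Tendsto (fun m : ℕ => ((1 / b m : ℝ) : EReal) *
          ENNReal.log (∫⁻ ω, ENNReal.ofReal
            (Real.exp (β * Real.sqrt (b m * X m ω))) ∂(P m))) atTop
        (𝓝 (((((p + 1) / p) * (p * C₀) ^ ((1 : ℝ) / (p + 1)) *
          (β / 2) ^ (2 * p / (p + 1)) : ℝ)) : EReal))) :
    ∀ β : ℝ, 0 < β →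
      Tendsto (fun m : ℕ => ((1 / b m : ℝ) : EReal) *
          ENNReal.log (∫⁻ ω, ENNReal.ofReal (Real.exp (β * X m ω)) ∂(P m))) atTop
        (𝓝 ((C₀ * β ^ p : ℝ) : EReal)) := by
  intro β hβ
  have hp₀ : 0 < p := by linarith
  rw [tendsto_inv_mul_log_iff hbpos]
  intro ε hε
  exact (eventually_ofReal_exp_le_lintegral hXnonneg hbpos hp₀ hC₀ hlb hβ hε).and
    (eventually_lintegral_le_ofReal_exp hXmeas hXnonneg hbpos hbtop hp₀ hC₀
      (hub (2 * β) (by positivity)) hlb hβ hε)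

/-- Lemma A.2, second assertion.  Let `X_m ≥ 0` be random variables and
`b_m → ∞` positive reals.  If for every `β > 0`
`limsup (1/b_m) log E exp{β X_m} < ∞` and
`lim (1/b_m) log E exp{β (b_m X_m)^{1/2}} = ((p+1)/p)(pC₀)^{1/(p+1)}(β/2)^{2p/(p+1)}`,
then for every `β > 0`, `lim (1/b_m) log E exp{β X_m} = C₀ β^p`. -/
theorem statement_9
    (Ω : ℕ → Type*) [∀ m, MeasurableSpace (Ω m)]
    (P : ∀ m, Measure (Ω m)) [∀ m, IsProbabilityMeasure (P m)]
    (X : ∀ m, Ω m → ℝ) (hXmeas : ∀ m, Measurable (X m)) (hXnonneg : ∀ m ω, 0 ≤ X m ω)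
    (b : ℕ → ℝ) (hbpos : ∀ m, 0 < b m) (hbtop : Tendsto b atTop atTop)
    (p C₀ : ℝ) (hp : 1 < p) (hC₀ : 0 < C₀)
    (hub : ∀ β : ℝ, 0 < β →
      limsup (fun m : ℕ => ((1 / b m : ℝ) : EReal) *
          ENNReal.log (∫⁻ ω, ENNReal.ofReal (Real.exp (β * X m ω)) ∂(P m))) atTop
        < (⊤ : EReal))
    (hlb : ∀ β : ℝ, 0 < β →
      Tendsto (fun m : ℕ => ((1 / b m : ℝ) : EReal) *
          ENNReal.log (∫⁻ ω, ENNReal.ofReal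
            (Real.exp (β * Real.sqrt (b m * X m ω))) ∂(P m))) atTop
        (𝓝 (((((p + 1) / p) * (p * C₀) ^ ((1 : ℝ) / (p + 1)) *
          (β / 2) ^ (2 * p / (p + 1)) : ℝ)) : EReal))) :
    ∀ β : ℝ, 0 < β →
      Tendsto (fun m : ℕ => ((1 / b m : ℝ) : EReal) *
          ENNReal.log (∫⁻ ω, ENNReal.ofReal (Real.exp (β * X m ω)) ∂(P m))) atTop
        (𝓝 ((C₀ * β ^ p : ℝ) : EReal)) :=
  statement_9_general Ω P X hXmeas hXnonneg b hbpos hbtop p C₀ hp hC₀ hub hlb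
end
end

section
/- Fix an integer d ≥ 1 and reals α₁,…,α_d ∈ (0,1]. Let N ≥ 4 be a real number, let z, z′ ∈ (Nℤ)^d with z ≠ z′ (i.e., each coordinate of z and z′ is an integer multiple of N), and let w ∈ ℝ^d satisfy 0 < |w_i| ≤ 2 for every i = 1,…,d. Then ∏_{i=1}^d |(z_i − z_i′) + w_i|^{−α_i} ≤ (2/(N−2))^{min_{1≤i≤d} α_i} · ∏_{i=1}^d |w_i|^{−α_i}. -/
/-!
Only the coordinates where `z` and `z'` differ matter; there is at least one such coordinate `i₀`.
Distinct points of `Nℤ` are at distance at least `N`, so `|(zᵢ - zᵢ') + wᵢ| ≥ N - 2`, which is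
`≥ |wᵢ|` and `≥ ((N - 2)/2) |wᵢ|` since `|wᵢ| ≤ 2 ≤ N - 2`. Hence every factor of the left-hand
product is at most the matching factor on the right, and the factor at `i₀` gains
`(2/(N-2))^{α_{i₀}} ≤ (2/(N-2))^{min α}`.
-/

open Real

theorem Finset.prod_le_mul_prod_of_le {ι R : Type*} [CommMonoidWithZero R] [PartialOrder R]
    [ZeroLEOneClass R] [PosMulMono R] [MulPosMono R] {s : Finset ι} {f g : ι → R} {i₀ : ι}
    (hi₀ : i₀ ∈ s) {r : R} (hf : ∀ i ∈ s, 0 ≤ f i) (hfg : ∀ i ∈ s, f i ≤ g i)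
    (hfg₀ : f i₀ ≤ r * g i₀) : ∏ i ∈ s, f i ≤ r * ∏ i ∈ s, g i := by
  classical
  rw [← Finset.mul_prod_erase s f hi₀, ← Finset.mul_prod_erase s g hi₀, ← mul_assoc]
  exact mul_le_mul hfg₀
    (Finset.prod_le_prod (fun i hi => hf i (Finset.mem_of_mem_erase hi))
      (fun i hi => hfg i (Finset.mem_of_mem_erase hi)))
    (Finset.prod_nonneg fun i hi => hf i (Finset.mem_of_mem_erase hi))
    ((hf i₀ hi₀).trans hfg₀)

theorem le_abs_mul_intCast_sub {N : ℝ} (hN : 0 ≤ N) {a b : ℤ} (hab : a ≠ b) :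
    N ≤ |N * a - N * b| := by
  have hone : (1 : ℝ) ≤ |(a : ℝ) - b| := by
    exact_mod_cast Int.one_le_abs (sub_ne_zero.mpr hab)
  rw [← mul_sub, abs_mul, abs_of_nonneg hN]
  exact le_mul_of_one_le_right hN hone

theorem sub_abs_le_abs_sub_add_of_mul_int {N x y : ℝ} (hN : 0 ≤ N) (hx : ∃ m : ℤ, x = N * m)
    (hy : ∃ m : ℤ, y = N * m) (hxy : x ≠ y) (w : ℝ) : N - |w| ≤ |x - y + w| := by
  obtain ⟨a, rfl⟩ := hx
  obtain ⟨b, rfl⟩ := hy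
  have hab : a ≠ b := by rintro rfl; exact hxy rfl
  linarith [le_abs_mul_intCast_sub hN hab, abs_sub_abs_le_abs_add (N * a - N * b) w]

theorem rpow_neg_le_inv_rpow_mul_rpow_neg {c u v a : ℝ} (hc : 0 < c) (hu : 0 < u)
    (h : c * u ≤ v) (ha : 0 ≤ a) : v ^ (-a) ≤ c⁻¹ ^ a * u ^ (-a) := by
  calc v ^ (-a) ≤ (c * u) ^ (-a) := rpow_le_rpow_of_nonpos (by positivity) h (neg_nonpos.2 ha)
    _ = c⁻¹ ^ a * u ^ (-a) := by
      rw [mul_rpow hc.le hu.le, rpow_neg hc.le, inv_rpow hc.le]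

/-- decorrelation inequality (2.9).  For exponents `αᵢ ∈ (0,1]`,
`N ≥ 4`, lattice points `z ≠ z'` in `(Nℤ)^d`, and perturbations `0 < |wᵢ| ≤ 2`,
`∏ᵢ |(zᵢ-zᵢ') + wᵢ|^{-αᵢ} ≤ (2/(N-2))^{minᵢ αᵢ} · ∏ᵢ |wᵢ|^{-αᵢ}`. -/
theorem statement_16
    (d : ℕ) (hd : 1 ≤ d) (α : Fin d → ℝ) (hα : ∀ i, 0 < α i ∧ α i ≤ 1)
    (N : ℝ) (hN : 4 ≤ N) (z z' : Fin d → ℝ)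
    (hz : ∀ i, ∃ m : ℤ, z i = N * m) (hz' : ∀ i, ∃ m : ℤ, z' i = N * m)
    (hne : z ≠ z') (w : Fin d → ℝ) (hw : ∀ i, 0 < |w i| ∧ |w i| ≤ 2) :
    (∏ i, |z i - z' i + w i| ^ (-(α i)))
      ≤ (2 / (N - 2)) ^
          (Finset.univ.inf' ⟨(⟨0, hd⟩ : Fin d), Finset.mem_univ _⟩ α) *
        ∏ i, |w i| ^ (-(α i)) := by
  obtain ⟨i₀, hi₀⟩ := Function.ne_iff.1 hne
  have hsep : ∀ i, z i ≠ z' i → N - 2 ≤ |z i - z' i + w i| := fun i hi => by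
    linarith [sub_abs_le_abs_sub_add_of_mul_int (by linarith) (hz i) (hz' i) hi (w i), (hw i).2]
  have hfactor : ∀ i, |z i - z' i + w i| ^ (-(α i)) ≤ |w i| ^ (-(α i)) := fun i => by
    by_cases hi : z i = z' i
    · simp [hi]
    · exact rpow_le_rpow_of_nonpos (hw i).1 (by linarith [hsep i hi, (hw i).2])
        (neg_nonpos.2 (hα i).1.le)
  have hfactor₀ : |z i₀ - z' i₀ + w i₀| ^ (-(α i₀))
      ≤ (2 / (N - 2)) ^ (α i₀) * |w i₀| ^ (-(α i₀)) := by
    rw [← inv_div]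
    refine rpow_neg_le_inv_rpow_mul_rpow_neg (by linarith) (hw i₀).1 ?_ (hα i₀).1.le
    nlinarith [hsep i₀ hi₀, hw i₀]
  have hmin : (2 / (N - 2)) ^ (α i₀)
      ≤ (2 / (N - 2)) ^ (Finset.univ.inf' ⟨(⟨0, hd⟩ : Fin d), Finset.mem_univ _⟩ α) :=
    rpow_le_rpow_of_exponent_ge (by bound) ((div_le_one (by linarith)).2 (by linarith))
      (Finset.inf'_le _ (Finset.mem_univ _))
  refine Finset.prod_le_mul_prod_of_le (Finset.mem_univ i₀) (fun i _ => by positivity)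
    (fun i _ => hfactor i) (hfactor₀.trans ?_)
  gcongr
end
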